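/- In a graph G, geodesics are stable (there is R ≥ 0 such that any two geodesics with the same endpoints are at Hausdorff distance at most R) if and only if there exist constants ε > 0 and k,m ∈ ℕ such that G is ε-densely (k,m)-chordal on the family of cycles that are bigons. Quantitatively: ε-densely (k,m)-chordal on bigons gives stability with R = max{k/2, ε+m}, and stability with constant R gives (2R+1)-densely (4R+4, R)-chordal on bigons. -/

import Mathlib

set_option linter.unusedSectionVars false


/- Combinatorial model: a graph with unit edge lengths, viewed through its
vertex set with the shortest-path metric `SimpleGraph.dist`. -/

namespace SimpleGraph

variable {V : Type*} (G : SimpleGraph V)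

/-- `G` is `μ`-uniform: every vertex has at most `μ` neighbors. -/
def UniformGraph (μ : ℕ) : Prop :=
  ∀ v : V, (G.neighborSet v).Finite ∧ (G.neighborSet v).ncard ≤ μ

/-- A walk is a geodesic if its length realizes the distance between its ends. -/
def IsGeodesic {a b : V} (p : G.Walk a b) : Prop := p.length = G.dist a b

/-- The length metric `d_w` on the subgraph formed by the edges of the walk `w`. -/
noncomputable def walkDist {a b : V} (w : G.Walk a b) (p q : V) : ℕ :=
  (SimpleGraph.fromEdgeSet {e | e ∈ w.edges}).dist p q

/-- `σ` is a shortcut of the cycle `c`: a path joining two vertices `p, q` of `c`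
with `L(σ) < d_c(p,q)`. -/
def IsShortcut {v p q : V} (c : G.Walk v v) (σ : G.Walk p q) : Prop :=
  σ.IsPath ∧ p ∈ c.support ∧ q ∈ c.support ∧ σ.length < G.walkDist c p q

/-- A strict shortcut meets the cycle only in its endpoints (the shortcut vertices). -/
def IsStrictShortcut {v p q : V} (c : G.Walk v v) (σ : G.Walk p q) : Prop :=
  G.IsShortcut c σ ∧ {x | x ∈ σ.support} ∩ {x | x ∈ c.support} = {p, q}

/-- `G` is `(k,m)`-chordal: every cycle of length at least `k` has a shortcut of
length at most `m`. -/
def KMChordal (k m : ℕ) : Prop :=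
  ∀ (v : V) (c : G.Walk v v), c.IsCycle → k ≤ c.length →
    ∃ (p q : V) (σ : G.Walk p q), G.IsShortcut c σ ∧ σ.length ≤ m

/-- `G` is `ε`-densely `(k,m)`-chordal on the family `F` of cycles: every cycle in `F`
of length at least `k` has strict shortcuts of length at most `m` whose shortcut
vertices are `ε`-dense in the cycle metric. -/
def DenselyChordalOn (F : ∀ v : V, G.Walk v v → Prop) (ε : ℝ) (k m : ℕ) : Prop :=
  ∀ (v : V) (c : G.Walk v v), c.IsCycle → F v c → k ≤ c.length →
    ∀ x ∈ c.support, ∃ (p q : V) (σ : G.Walk p q),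
      G.IsStrictShortcut c σ ∧ σ.length ≤ m ∧ (G.walkDist c x p : ℝ) < ε

/-- `G` is `ε`-densely `(k,m)`-chordal (on all cycles). -/
def DenselyChordal (ε : ℝ) (k m : ℕ) : Prop :=
  G.DenselyChordalOn (fun _ _ => True) ε k m

/-- `S` is an `ab`-separator: `a, b ∉ S` and every walk from `a` to `b` meets `S`. -/
def Separates (S : Set V) (a b : V) : Prop :=
  a ∉ S ∧ b ∉ S ∧ ∀ p : G.Walk a b, ∃ v ∈ p.support, v ∈ S

/-- `S` is a minimal `ab`-separator. -/
def MinimalABSeparator (S : Set V) (a b : V) : Prop :=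
  G.Separates S a b ∧ ∀ S' : Set V, S' ⊂ S → ¬ G.Separates S' a b

end SimpleGraph

namespace SimpleGraph

variable {V : Type*} (G : SimpleGraph V)

/-- The cycle `c` is a bigon: it is formed by two geodesics with the same endpoints. -/
def IsBigon {v : V} (c : G.Walk v v) : Prop :=
  ∃ (y : V) (p q : G.Walk v y), G.IsGeodesic p ∧ G.IsGeodesic q ∧ c = p.append q.reverse

/-- Geodesics (between vertices) are stable with constant `R`: any two geodesics with
the same endpoints are at Hausdorff distance at most `R`. -/
def GeodesicsStable (R : ℝ) : Prop :=
  ∀ (a b : V) (p q : G.Walk a b), G.IsGeodesic p → G.IsGeodesic q →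
    (∀ x ∈ p.support, ∃ y ∈ q.support, (G.dist x y : ℝ) ≤ R) ∧
    (∀ y ∈ q.support, ∃ x ∈ p.support, (G.dist x y : ℝ) ≤ R)

end SimpleGraph

namespace SimpleGraph

variable {V : Type*} {G : SimpleGraph V} [DecidableEq V]

/-- A geodesic is a path. -/
lemma IsGeodesicAux.isPath {a b : V} {p : G.Walk a b} (h : p.length = G.dist a b) : p.IsPath :=
  p.isPath_of_length_eq_dist h

lemma geodesic_split (hconn : G.Connected) {a b : V} {p : G.Walk a b}
    (h : p.length = G.dist a b) {u : V} (hu : u ∈ p.support) :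
    (p.takeUntil u hu).length = G.dist a u ∧ (p.dropUntil u hu).length = G.dist u b := by
  have h1 : G.dist a u ≤ (p.takeUntil u hu).length := dist_le _
  have h2 : G.dist u b ≤ (p.dropUntil u hu).length := dist_le _
  have h3 : (p.takeUntil u hu).length + (p.dropUntil u hu).length = p.length := by
    rw [← Walk.length_append, p.take_spec hu]
  have h4 : G.dist a b ≤ G.dist a u + G.dist u b := hconn.dist_triangle
  omega

lemma geodesic_dist_add (hconn : G.Connected) {a b : V} {p : G.Walk a b}
    (h : p.length = G.dist a b) {u : V} (hu : u ∈ p.support) :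
    G.dist a u + G.dist u b = G.dist a b := by
  obtain ⟨h1, h2⟩ := geodesic_split hconn h hu
  have h3 : (p.takeUntil u hu).length + (p.dropUntil u hu).length = p.length := by
    rw [← Walk.length_append, p.take_spec hu]
  omega

/-- On a geodesic path, a vertex is determined by its distance from the start. -/
lemma geodesic_eq_of_dist_eq (hconn : G.Connected) {a b : V} {p : G.Walk a b}
    (h : p.length = G.dist a b) {s t : V} (hs : s ∈ p.support) (ht : t ∈ p.support)
    (hst : G.dist a s = G.dist a t) : s = t := by
  have hps : (p.takeUntil s hs).length = G.dist a s := (geodesic_split hconn h hs).1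
  have hpt : (p.takeUntil t ht).length = G.dist a t := (geodesic_split hconn h ht).1
  have h1 : p.getVert (G.dist a s) = s := by
    conv_lhs => rw [← p.take_spec hs]
    rw [Walk.getVert_append]
    simp [hps]
  have h2 : p.getVert (G.dist a t) = t := by
    conv_lhs => rw [← p.take_spec ht]
    rw [Walk.getVert_append]
    simp [hpt]
  rw [← h1, ← h2, hst]

/-- Along a geodesic one can travel between any two of its vertices by a geodesic
subwalk using only edges of the geodesic. -/
lemma geodesic_between (hconn : G.Connected) {a b : V} {p : G.Walk a b}
    (h : p.length = G.dist a b) {s t : V} (hs : s ∈ p.support) (ht : t ∈ p.support)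
    (hst : G.dist a s ≤ G.dist a t) :
    ∃ W : G.Walk s t, W.length = G.dist s t ∧ (∀ e ∈ W.edges, e ∈ p.edges) ∧
      G.dist s t + G.dist a s = G.dist a t := by
  rcases eq_or_lt_of_le hst with heq | hlt
  · obtain rfl := geodesic_eq_of_dist_eq hconn h hs ht heq
    exact ⟨Walk.nil, by simp [dist_self], by simp, by simp [dist_self]⟩
  · have hdrop : (p.dropUntil s hs).length = G.dist s b := (geodesic_split hconn h hs).2
    have ht' : t ∈ (p.dropUntil s hs).support := by
      have : t ∈ (p.takeUntil s hs).support ∨ t ∈ (p.dropUntil s hs).support := by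
        rw [← Walk.mem_support_append_iff, p.take_spec hs]; exact ht
      rcases this with h' | h'
      · exfalso
        have : G.dist a t ≤ (p.takeUntil s hs).length := by
          calc G.dist a t ≤ ((p.takeUntil s hs).takeUntil t h').length := dist_le _
            _ ≤ (p.takeUntil s hs).length := Walk.length_takeUntil_le _ _
        rw [(geodesic_split hconn h hs).1] at this
        omega
      · exact h'
    refine ⟨(p.dropUntil s hs).takeUntil t ht', ?_, ?_, ?_⟩
    · exact (geodesic_split hconn hdrop ht').1
    · intro e he
      exact Walk.edges_dropUntil_subset p hs (Walk.edges_takeUntil_subset _ ht' he)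
    · have e1 : G.dist a s + G.dist s b = G.dist a b := geodesic_dist_add hconn h hs
      have e2 : G.dist a t + G.dist t b = G.dist a b := geodesic_dist_add hconn h ht
      have e3 : G.dist s t + G.dist t b = G.dist s b := geodesic_dist_add hconn hdrop ht'
      omega

section WalkDist

/-- The cycle subgraph. -/
noncomputable abbrev walkGraph {a b : V} (c : G.Walk a b) : SimpleGraph V :=
  SimpleGraph.fromEdgeSet {e | e ∈ c.edges}

lemma walkGraph_le {a b : V} (c : G.Walk a b) : walkGraph c ≤ G := by
  intro x y hxy
  rw [fromEdgeSet_adj] at hxy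
  exact (mem_edgeSet G).mp (c.edges_subset_edgeSet hxy.1)

lemma mem_walkGraph_edgeSet {a b : V} (c : G.Walk a b) {e : Sym2 V} (he : e ∈ c.edges) :
    e ∈ (walkGraph c).edgeSet := by
  rw [edgeSet_fromEdgeSet]
  exact ⟨he, G.not_isDiag_of_mem_edgeSet (c.edges_subset_edgeSet he)⟩

lemma walkDist_le {a b s t : V} (c : G.Walk a b) (W : G.Walk s t)
    (hW : ∀ e ∈ W.edges, e ∈ c.edges) : G.walkDist c s t ≤ W.length := by
  have h : ∀ e ∈ W.edges, e ∈ (walkGraph c).edgeSet := fun e he =>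
    mem_walkGraph_edgeSet c (hW e he)
  calc (walkGraph c).dist s t ≤ (W.transfer (walkGraph c) h).length := dist_le _
    _ = W.length := W.length_transfer h

lemma walkDist_comm {a b s t : V} (c : G.Walk a b) : G.walkDist c s t = G.walkDist c t s :=
  dist_comm

lemma reachable_walkGraph {a b : V} (c : G.Walk a b) {s t : V}
    (hs : s ∈ c.support) (ht : t ∈ c.support) : (walkGraph c).Reachable s t := by
  have hc : ∀ e ∈ c.edges, e ∈ (walkGraph c).edgeSet := fun e he => mem_walkGraph_edgeSet c he
  set c' := c.transfer (walkGraph c) hc with hc'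
  have hsup : c'.support = c.support := c.support_transfer hc
  rw [← hsup] at hs ht
  have h1 : (walkGraph c).Reachable a s := ⟨c'.takeUntil s hs⟩
  have h2 : (walkGraph c).Reachable a t := ⟨c'.takeUntil t ht⟩
  exact h1.symm.trans h2

lemma walkDist_triangle {a b : V} (c : G.Walk a b) {s t u : V}
    (hs : s ∈ c.support) (ht : t ∈ c.support) (hu : u ∈ c.support) :
    G.walkDist c s u ≤ G.walkDist c s t + G.walkDist c t u := by
  obtain ⟨W1, hW1⟩ := (reachable_walkGraph c hs ht).exists_walk_length_eq_dist
  obtain ⟨W2, hW2⟩ := (reachable_walkGraph c ht hu).exists_walk_length_eq_dist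
  calc (walkGraph c).dist s u ≤ (W1.append W2).length := dist_le _
    _ = _ := by rw [Walk.length_append, hW1, hW2]; rfl

lemma dist_le_of_walkGraph_walk {a b s t : V} (c : G.Walk a b)
    (W : (walkGraph c).Walk s t) : G.dist s t ≤ W.length := by
  have h : ∀ e ∈ W.edges, e ∈ G.edgeSet := fun e he => by
    have := W.edges_subset_edgeSet he
    rw [edgeSet_fromEdgeSet] at this
    exact c.edges_subset_edgeSet this.1
  calc G.dist s t ≤ (W.transfer G h).length := dist_le _
    _ = W.length := W.length_transfer h

lemma dist_le_walkDist {a b : V} (c : G.Walk a b) {s t : V}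
    (hs : s ∈ c.support) (ht : t ∈ c.support) : G.dist s t ≤ G.walkDist c s t := by
  obtain ⟨W, hW⟩ := (reachable_walkGraph c hs ht).exists_walk_length_eq_dist
  calc G.dist s t ≤ W.length := dist_le_of_walkGraph_walk c W
    _ = G.walkDist c s t := hW

end WalkDist

section GetVert

lemma dist_getVert_le (hconn : G.Connected) {a b : V} (p : G.Walk a b) (i : ℕ) :
    G.dist a (p.getVert i) ≤ i := by
  induction i with
  | zero => simp [Walk.getVert_zero, dist_self]
  | succ i ih =>
    by_cases hi : i < p.length
    · have hadj : G.Adj (p.getVert i) (p.getVert (i + 1)) := p.adj_getVert_succ hi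
      calc G.dist a (p.getVert (i + 1))
          ≤ G.dist a (p.getVert i) + G.dist (p.getVert i) (p.getVert (i + 1)) :=
            hconn.dist_triangle
        _ ≤ i + 1 := by
            have : G.dist (p.getVert i) (p.getVert (i + 1)) = 1 := dist_eq_one_iff_adj.mpr hadj
            omega
    · push_neg at hi
      rw [p.getVert_of_length_le (by omega)]
      calc G.dist a b ≤ p.length := dist_le p
        _ ≤ i + 1 := by omega

lemma geodesic_getVert (hconn : G.Connected) {a b : V} {p : G.Walk a b}
    (hp : p.length = G.dist a b) {i : ℕ} (hi : i ≤ p.length) :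
    G.dist a (p.getVert i) = i ∧ G.dist (p.getVert i) b = p.length - i := by
  have h1 : G.dist a (p.getVert i) ≤ i := dist_getVert_le hconn p i
  have h2 : G.dist (p.getVert i) b ≤ p.length - i := by
    have := dist_getVert_le hconn p.reverse (p.length - i)
    rw [Walk.getVert_reverse] at this
    have heq : p.length - (p.length - i) = i := by omega
    rw [heq] at this
    calc G.dist (p.getVert i) b = G.dist b (p.getVert i) := dist_comm
      _ ≤ p.length - i := this
  have h3 : G.dist a b ≤ G.dist a (p.getVert i) + G.dist (p.getVert i) b :=
    hconn.dist_triangle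
  omega

end GetVert

section PassThrough

/-- Any walk in the cycle subgraph starting on `p` and ending off `p` passes
through `v` or `y`, provided every edge of `c` is an edge of `p` or of `q` and
`p` and `q` meet only in `v, y`. -/
lemma pass_through {v y : V} {p q : G.Walk v y} {av : V} {c : G.Walk av av}
    (hcpq : ∀ e ∈ c.edges, e ∈ p.edges ∨ e ∈ q.edges)
    (hint : ∀ w, w ∈ p.support → w ∈ q.support → w = v ∨ w = y)
    {s z : V} (W : (walkGraph c).Walk s z) :
    s ∈ p.support → z ∉ p.support → v ∈ W.support ∨ y ∈ W.support := by
  induction W with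
  | nil => intro hs hz; exact absurd hs hz
  | @cons s t z hadj W ih =>
    intro hs hz
    by_cases hsv : s = v
    · left; rw [← hsv]; exact Walk.start_mem_support _
    by_cases hsy : s = y
    · right; rw [← hsy]; exact Walk.start_mem_support _
    have he : s(s, t) ∈ c.edges := by
      rw [fromEdgeSet_adj] at hadj
      exact hadj.1
    have ht : t ∈ p.support := by
      rcases hcpq _ he with h' | h'
      · exact p.snd_mem_support_of_mem_edges h'
      · exact absurd (hint s hs (q.fst_mem_support_of_mem_edges h')) (by simp [hsv, hsy])
    rcases ih ht hz with h' | h'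
    · left; exact List.mem_cons_of_mem _ h'
    · right; exact List.mem_cons_of_mem _ h'

end PassThrough

section Extract

lemma strictShortcut_length_pos {av : V} {c : G.Walk av av} {s t : V} {σ : G.Walk s t}
    (h : G.IsStrictShortcut c σ) : 1 ≤ σ.length := by
  by_contra h0
  push_neg at h0
  interval_cases hσ : σ.length
  · have hst : s = t := σ.eq_of_length_eq_zero hσ
    have := h.1.2.2.2
    rw [hσ] at this
    subst hst
    have : G.walkDist c s s = 0 := dist_self
    omega

/-- Shortcut extraction: a path between two vertices of `c` either witnesses a
short cycle-distance, or yields a strict shortcut close to its start. -/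
lemma shortcut_extract {av : V} (c : G.Walk av av) :
    ∀ (n : ℕ) {s t : V} (σ : G.Walk s t), σ.length ≤ n → σ.IsPath →
      s ∈ c.support → t ∈ c.support →
      G.walkDist c s t ≤ σ.length ∨
        ∃ (p' q' : V) (τ : G.Walk p' q'), G.IsStrictShortcut c τ ∧
          G.walkDist c s p' + τ.length ≤ σ.length := by
  intro n
  induction n with
  | zero =>
    intro s t σ hn _ _ _
    have h0 : σ.length = 0 := by omega
    obtain rfl : s = t := σ.eq_of_length_eq_zero h0
    left
    calc G.walkDist c s s = 0 := dist_self
      _ ≤ σ.length := by omega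
  | succ n ih =>
    intro s t σ hn hσ hs ht
    by_cases hmid : ∃ w, w ∈ σ.support ∧ w ∈ c.support ∧ w ≠ s ∧ w ≠ t
    · obtain ⟨w, hw1, hw2, hw3, hw4⟩ := hmid
      set σ1 := σ.takeUntil w hw1 with hσ1
      set σ2 := σ.dropUntil w hw1 with hσ2
      have hlen : σ1.length + σ2.length = σ.length := by
        rw [← Walk.length_append, σ.take_spec hw1]
      have h1pos : 1 ≤ σ1.length := by
        rcases Nat.eq_zero_or_pos σ1.length with h0 | h0
        · exact absurd (σ1.eq_of_length_eq_zero h0).symm hw3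
        · omega
      have h2pos : 1 ≤ σ2.length := by
        rcases Nat.eq_zero_or_pos σ2.length with h0 | h0
        · exact absurd (σ2.eq_of_length_eq_zero h0) hw4
        · omega
      have hσ1p : σ1.IsPath := hσ.takeUntil hw1
      have hσ2p : σ2.IsPath := hσ.dropUntil hw1
      rcases ih σ1 (by omega) hσ1p hs hw2 with h' | ⟨p', q', τ, hτ, hb⟩
      · rcases ih σ2 (by omega) hσ2p hw2 ht with h'' | ⟨p', q', τ, hτ, hb⟩
        · left
          calc G.walkDist c s t ≤ G.walkDist c s w + G.walkDist c w t :=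
              walkDist_triangle c hs hw2 ht
            _ ≤ σ1.length + σ2.length := by omega
            _ = σ.length := hlen
        · right
          refine ⟨p', q', τ, hτ, ?_⟩
          have hp'c : p' ∈ c.support := hτ.1.2.1
          have := walkDist_triangle c hs hw2 hp'c
          omega
      · right
        refine ⟨p', q', τ, hτ, by omega⟩
    · push_neg at hmid
      by_cases hwd : G.walkDist c s t ≤ σ.length
      · left; exact hwd
      · right
        push_neg at hwd
        refine ⟨s, t, σ, ⟨⟨hσ, hs, ht, hwd⟩, ?_⟩, ?_⟩
        · ext x
          simp only [Set.mem_inter_iff, Set.mem_setOf_eq, Set.mem_insert_iff,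
            Set.mem_singleton_iff]
          constructor
          · rintro ⟨hx1, hx2⟩
            by_contra hcon
            push_neg at hcon
            exact hcon.2 (hmid x hx1 hx2 hcon.1)
          · rintro (rfl | rfl)
            · exact ⟨σ.start_mem_support, hs⟩
            · exact ⟨σ.end_mem_support, ht⟩
        · have : G.walkDist c s s = 0 := dist_self
          omega

end Extract

section Bigon

/-- Two internally-disjoint geodesics between vertices at distance `≥ 2` form a cycle. -/
lemma bigon_isCycle (hconn : G.Connected) {a b : V} {p q : G.Walk a b}
    (hp : p.length = G.dist a b) (hq : q.length = G.dist a b) (hd : 2 ≤ G.dist a b)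
    (hint : ∀ w, w ∈ p.support → w ∈ q.support → w = a ∨ w = b) :
    (p.append q.reverse).IsCycle := by
  have hpp : p.IsPath := p.isPath_of_length_eq_dist hp
  have hqp : q.IsPath := q.isPath_of_length_eq_dist hq
  have hab : a ≠ b := by
    rintro rfl
    rw [dist_self] at hd; omega
  have hnoadj : ¬ G.Adj a b := by
    intro h
    have := dist_eq_one_iff_adj.mpr h
    omega
  rw [Walk.isCycle_def]
  refine ⟨⟨?_⟩, ?_, ?_⟩
  · -- edges nodup
    rw [Walk.edges_append]
    rw [List.nodup_append]
    refine ⟨hpp.1.1, (q.reverse.isPath_of_length_eq_dist (by rwa [Walk.length_reverse, dist_comm])).1.1, ?_⟩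
    intro e hep e' heq' hee'
    subst e'
    have heq : e ∈ q.edges := by
      rw [Walk.edges_reverse, List.mem_reverse] at heq'
      exact heq'
    induction e with
    | h x z =>
      have hxp := p.fst_mem_support_of_mem_edges hep
      have hzp := p.snd_mem_support_of_mem_edges hep
      have hxq := q.fst_mem_support_of_mem_edges heq
      have hzq := q.snd_mem_support_of_mem_edges heq
      have hadj : G.Adj x z := p.adj_of_mem_edges hep
      have hxz : x ≠ z := hadj.ne
      rcases hint x hxp hxq with rfl | rfl <;> rcases hint z hzp hzq with rfl | rfl
      · exact hxz rfl
      · exact hnoadj hadj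
      · exact hnoadj hadj.symm
      · exact hxz rfl
  · -- not nil
    intro h
    have h0 : (p.append q.reverse).length = 0 := by rw [h]; rfl
    rw [Walk.length_append, Walk.length_reverse] at h0
    omega
  · -- support tail nodup
    rw [Walk.tail_support_append, List.nodup_append]
    have hrev : q.reverse.IsPath := q.reverse.isPath_of_length_eq_dist
      (by rwa [Walk.length_reverse, dist_comm])
    refine ⟨hpp.2.tail, hrev.2.tail, ?_⟩
    intro x hxp x' hxq hxx'
    subst x'
    have hxp' : x ∈ p.support := List.mem_of_mem_tail hxp
    have hxq' : x ∈ q.support := by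
      have : x ∈ q.reverse.support := List.mem_of_mem_tail hxq
      rwa [Walk.support_reverse, List.mem_reverse] at this
    rcases hint x hxp' hxq' with rfl | rfl
    · have : p.support = x :: p.support.tail := p.support_eq_cons
      have hnd := hpp.2
      rw [this] at hnd
      exact (List.nodup_cons.mp hnd).1 hxp
    · have : q.reverse.support = x :: q.reverse.support.tail := q.reverse.support_eq_cons
      have hnd := hrev.2
      rw [this] at hnd
      exact (List.nodup_cons.mp hnd).1 hxq

/-- In a bigon cycle, the two sides meet only at the endpoints. -/
lemma bigon_inter {v y : V} {p q : G.Walk v y} (hc : (p.append q.reverse).IsCycle)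
    (hpn : ¬ p.Nil) (hqn : ¬ q.Nil) :
    ∀ w, w ∈ p.support → w ∈ q.support → w = v ∨ w = y := by
  intro w hwp hwq
  by_contra hcon
  push_neg at hcon
  obtain ⟨hwv, hwy⟩ := hcon
  have h1 : w ∈ p.support.tail := by
    have := p.support_eq_cons
    rw [this] at hwp
    rcases List.mem_cons.mp hwp with h | h
    · exact absurd h hwv
    · exact h
  have h2 : w ∈ q.reverse.support.tail := by
    have hw' : w ∈ q.reverse.support := by
      rw [Walk.support_reverse, List.mem_reverse]; exact hwq
    have := q.reverse.support_eq_cons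
    rw [this] at hw'
    rcases List.mem_cons.mp hw' with h | h
    · exact absurd h hwy
    · exact h
  have hnd := hc.2
  rw [Walk.tail_support_append] at hnd
  exact (List.disjoint_of_nodup_append hnd) h1 h2

end Bigon

section Part3

lemma part3_core (hconn : G.Connected) (R : ℕ) {v y : V} {c : G.Walk v v} {p q : G.Walk v y}
    (hp : p.length = G.dist v y) (hq : q.length = G.dist v y)
    (hpe : ∀ e ∈ p.edges, e ∈ c.edges)
    (hcpq : ∀ e ∈ c.edges, e ∈ p.edges ∨ e ∈ q.edges)
    (hps : ∀ w ∈ p.support, w ∈ c.support) (hqs : ∀ w ∈ q.support, w ∈ c.support)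
    (hint : ∀ w, w ∈ p.support → w ∈ q.support → w = v ∨ w = y)
    (hd : 2 * R + 2 ≤ G.dist v y)
    (hstab : ∀ u ∈ p.support, ∃ z ∈ q.support, G.dist u z ≤ R)
    {x : V} (hx : x ∈ p.support) :
    ∃ (p' q' : V) (σ : G.Walk p' q'), G.IsStrictShortcut c σ ∧ σ.length ≤ R ∧
      (G.walkDist c x p' : ℝ) < 2 * R + 1 := by
  set d := G.dist v y with hdd
  set j := G.dist v x with hj
  have hjd : j + G.dist x y = d := geodesic_dist_add hconn hp hx
  obtain ⟨i, hi1, hi2, hij1, hij2⟩ :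
      ∃ i, R + 1 ≤ i ∧ i ≤ d - (R + 1) ∧ i ≤ j + (R + 1) ∧ j ≤ i + (R + 1) :=
    ⟨min (max j (R + 1)) (d - (R + 1)), by omega, by omega, by omega, by omega⟩
  have hiL : i ≤ p.length := by omega
  obtain ⟨hdvu, hduy⟩ := geodesic_getVert hconn hp hiL
  set u := p.getVert i with hu
  have hu_mem : u ∈ p.support := Walk.mem_support_iff_exists_getVert.mpr ⟨i, hu.symm, hiL⟩
  have hduy' : G.dist u y = d - i := by omega
  obtain ⟨z, hzq, hz⟩ := hstab u hu_mem
  have hzp : z ∉ p.support := by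
    intro hzp'
    rcases hint z hzp' hzq with h | h
    · subst h
      have h2 : G.dist u z = i := dist_comm.trans hdvu
      omega
    · subst h
      omega
  have hzu : z ≠ u := fun h => hzp (h ▸ hu_mem)
  obtain ⟨σ0, hσ0p, hσ0l⟩ := hconn.exists_path_of_dist u z
  have hσ0R : σ0.length ≤ R := by omega
  have hxu : G.walkDist c x u ≤ R + 1 := by
    rcases le_total j i with hle | hle
    · obtain ⟨W, hWl, hWe, hWd⟩ := geodesic_between hconn hp hx hu_mem
        (show G.dist v x ≤ G.dist v u by omega)
      have h1 : G.walkDist c x u ≤ W.length := walkDist_le c W (fun e he => hpe e (hWe e he))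
      omega
    · obtain ⟨W, hWl, hWe, hWd⟩ := geodesic_between hconn hp hu_mem hx
        (show G.dist v u ≤ G.dist v x by omega)
      have h1 : G.walkDist c u x ≤ W.length := walkDist_le c W (fun e he => hpe e (hWe e he))
      have h2 : G.walkDist c x u = G.walkDist c u x := walkDist_comm c
      omega
  have hlow : R + 1 ≤ G.walkDist c u z := by
    obtain ⟨W, hWl⟩ :=
      (reachable_walkGraph c (hps u hu_mem) (hqs z hzq)).exists_walk_length_eq_dist
    rcases pass_through hcpq hint W hu_mem hzp with hv | hy
    · have h1 : G.dist u v ≤ (W.takeUntil v hv).length := dist_le_of_walkGraph_walk c _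
      have h2 : (W.takeUntil v hv).length ≤ W.length := Walk.length_takeUntil_le _ _
      have h3 : G.dist u v = i := dist_comm.trans hdvu
      have h4 : R + 1 ≤ W.length := by omega
      rw [hWl] at h4
      exact h4
    · have h1 : G.dist u y ≤ (W.takeUntil y hy).length := dist_le_of_walkGraph_walk c _
      have h2 : (W.takeUntil y hy).length ≤ W.length := Walk.length_takeUntil_le _ _
      have h4 : R + 1 ≤ W.length := by omega
      rw [hWl] at h4
      exact h4
  rcases shortcut_extract c σ0.length σ0 le_rfl hσ0p (hps u hu_mem) (hqs z hzq) with
    h | ⟨p', q', τ, hτ, hb⟩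
  · omega
  · have hτ1 : 1 ≤ τ.length := strictShortcut_length_pos hτ
    refine ⟨p', q', τ, hτ, by omega, ?_⟩
    have hxp' : G.walkDist c x p' ≤ G.walkDist c x u + G.walkDist c u p' :=
      walkDist_triangle c (hps x hx) (hps u hu_mem) hτ.1.2.1
    have hfin : G.walkDist c x p' ≤ 2 * R := by omega
    have hcast : (G.walkDist c x p' : ℝ) ≤ ((2 * R : ℕ) : ℝ) := Nat.cast_le.mpr hfin
    push_cast at hcast
    linarith

end Part3

section Part2

lemma stable_aux (hconn : G.Connected) {ε : ℝ} {k m : ℕ}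
    (hch : G.DenselyChordalOn (fun _ c => G.IsBigon c) ε k m) :
    ∀ (n : ℕ) {a b : V} (p q : G.Walk a b), p.length + q.length ≤ n →
      p.length = G.dist a b → q.length = G.dist a b →
      ∀ x ∈ p.support, ∃ z ∈ q.support, (G.dist x z : ℝ) ≤ max ((k : ℝ) / 2) (ε + m) := by
  intro n
  induction n using Nat.strong_induction_on with
  | _ n IH =>
  intro a b p q hn hp hq x hx
  set R := max ((k : ℝ) / 2) (ε + m) with hR
  have hmR : ε + (m : ℝ) ≤ R := le_max_right _ _
  have hm0 : (0 : ℝ) ≤ (m : ℕ) := Nat.cast_nonneg m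
  have hR0 : (0 : ℝ) ≤ R := le_trans (by positivity) (le_max_left ((k : ℝ) / 2) (ε + m))
  by_cases hab : a = b
  · subst hab
    have h0 : p.length = 0 := by rw [hp, dist_self]
    obtain ⟨i, hgi, hle⟩ := Walk.mem_support_iff_exists_getVert.mp hx
    have hi0 : i = 0 := by omega
    subst hi0
    rw [Walk.getVert_zero] at hgi
    subst hgi
    exact ⟨a, q.start_mem_support, by simpa [dist_self] using hR0⟩
  by_cases hmid : ∃ w, w ∈ p.support ∧ w ∈ q.support ∧ w ≠ a ∧ w ≠ b
  · obtain ⟨w, hwp, hwq, hwa, hwb⟩ := hmid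
    have hsp := geodesic_split hconn hp hwp
    have hsq := geodesic_split hconn hq hwq
    have hlp : (p.takeUntil w hwp).length + (p.dropUntil w hwp).length = p.length := by
      rw [← Walk.length_append, p.take_spec hwp]
    have hlq : (q.takeUntil w hwq).length + (q.dropUntil w hwq).length = q.length := by
      rw [← Walk.length_append, q.take_spec hwq]
    have hp2 : 1 ≤ (p.dropUntil w hwp).length := by
      rcases Nat.eq_zero_or_pos (p.dropUntil w hwp).length with h0 | h0
      · exact absurd ((p.dropUntil w hwp).eq_of_length_eq_zero h0) hwb
      · omega
    have hq2 : 1 ≤ (q.dropUntil w hwq).length := by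
      rcases Nat.eq_zero_or_pos (q.dropUntil w hwq).length with h0 | h0
      · exact absurd ((q.dropUntil w hwq).eq_of_length_eq_zero h0) hwb
      · omega
    have hp1 : 1 ≤ (p.takeUntil w hwp).length := by
      rcases Nat.eq_zero_or_pos (p.takeUntil w hwp).length with h0 | h0
      · exact absurd ((p.takeUntil w hwp).eq_of_length_eq_zero h0).symm hwa
      · omega
    have hq1 : 1 ≤ (q.takeUntil w hwq).length := by
      rcases Nat.eq_zero_or_pos (q.takeUntil w hwq).length with h0 | h0
      · exact absurd ((q.takeUntil w hwq).eq_of_length_eq_zero h0).symm hwa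
      · omega
    have hx' : x ∈ (p.takeUntil w hwp).support ∨ x ∈ (p.dropUntil w hwp).support := by
      rw [← Walk.mem_support_append_iff, p.take_spec hwp]; exact hx
    rcases hx' with hx1 | hx2
    · obtain ⟨z, hz1, hz2⟩ := IH (n - 1) (by omega) (p.takeUntil w hwp) (q.takeUntil w hwq)
        (by omega) hsp.1 hsq.1 x hx1
      exact ⟨z, q.support_takeUntil_subset hwq hz1, hz2⟩
    · obtain ⟨z, hz1, hz2⟩ := IH (n - 1) (by omega) (p.dropUntil w hwp) (q.dropUntil w hwq)
        (by omega) hsp.2 hsq.2 x hx2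
      exact ⟨z, q.support_dropUntil_subset hwq hz1, hz2⟩
  push_neg at hmid
  have hint : ∀ w, w ∈ p.support → w ∈ q.support → w = a ∨ w = b := by
    intro w h1 h2
    by_contra hcon
    push_neg at hcon
    exact hcon.2 (hmid w h1 h2 hcon.1)
  have hd1 : 1 ≤ G.dist a b := hconn.pos_dist_of_ne hab
  by_cases hd2 : 2 ≤ G.dist a b
  · have hcyc := bigon_isCycle hconn hp hq hd2 hint
    set c := p.append q.reverse with hc
    have hbig : G.IsBigon c := ⟨b, p, q, hp, hq, hc⟩
    have hclen : c.length = G.dist a b + G.dist a b := by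
      rw [hc, Walk.length_append, Walk.length_reverse, hp, hq]
    have hxc : x ∈ c.support := by
      rw [hc]; exact Walk.subset_support_append_left p q.reverse hx
    by_cases hk : k ≤ c.length
    · obtain ⟨p', q', σ, hstrict, hσm, hσε⟩ := hch a c hcyc hbig hk x hxc
      obtain ⟨hσpath, hp'c, hq'c, hσlt⟩ := hstrict.1
      have hσmR : (σ.length : ℝ) ≤ (m : ℕ) := Nat.cast_le.mpr hσm
      by_cases hp'q : p' ∈ q.support
      · refine ⟨p', hp'q, ?_⟩
        have h1 : G.dist x p' ≤ G.walkDist c x p' := dist_le_walkDist c hxc hp'c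
        have h1' : (G.dist x p' : ℝ) ≤ (G.walkDist c x p' : ℕ) := Nat.cast_le.mpr h1
        linarith
      · have hp'p : p' ∈ p.support := by
          have : p' ∈ p.support ∨ p' ∈ q.reverse.support := by
            rw [← Walk.mem_support_append_iff, ← hc]; exact hp'c
          rcases this with h' | h'
          · exact h'
          · rw [Walk.support_reverse, List.mem_reverse] at h'
            exact absurd h' hp'q
        by_cases hq'q : q' ∈ q.support
        · refine ⟨q', hq'q, ?_⟩
          have h1 : G.dist x q' ≤ G.dist x p' + G.dist p' q' := hconn.dist_triangle
          have h2 : G.dist x p' ≤ G.walkDist c x p' := dist_le_walkDist c hxc hp'c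
          have h3 : G.dist p' q' ≤ σ.length := dist_le σ
          have hcast : (G.dist x q' : ℝ) ≤ (G.walkDist c x p' : ℕ) + (σ.length : ℝ) := by
            have : G.dist x q' ≤ G.walkDist c x p' + σ.length := by omega
            have := (Nat.cast_le (α := ℝ)).mpr this
            push_cast at this ⊢
            linarith
          linarith
        · exfalso
          have hq'p : q' ∈ p.support := by
            have : q' ∈ p.support ∨ q' ∈ q.reverse.support := by
              rw [← Walk.mem_support_append_iff, ← hc]; exact hq'c
            rcases this with h' | h'
            · exact h'
            · rw [Walk.support_reverse, List.mem_reverse] at h'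
              exact absurd h' hq'q
          rcases le_total (G.dist a p') (G.dist a q') with hle | hle
          · obtain ⟨W, hWl, hWe, _⟩ := geodesic_between hconn hp hp'p hq'p hle
            have h1 : G.walkDist c p' q' ≤ W.length := walkDist_le c W (fun e he => by
              rw [hc, Walk.edges_append]
              exact List.mem_append_left _ (hWe e he))
            have h2 : G.dist p' q' ≤ σ.length := dist_le σ
            omega
          · obtain ⟨W, hWl, hWe, _⟩ := geodesic_between hconn hp hq'p hp'p hle
            have h1 : G.walkDist c q' p' ≤ W.length := walkDist_le c W (fun e he => by
              rw [hc, Walk.edges_append]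
              exact List.mem_append_left _ (hWe e he))
            have h2 : G.dist q' p' ≤ σ.length := by
              rw [dist_comm]; exact dist_le σ
            have h3 : G.walkDist c p' q' = G.walkDist c q' p' := walkDist_comm c
            omega
    · push_neg at hk
      have hxa : G.dist a x + G.dist x b = G.dist a b := geodesic_dist_add hconn hp hx
      rcases le_total (G.dist a x) (G.dist x b) with hle | hle
      · refine ⟨a, q.start_mem_support, ?_⟩
        have h2 : 2 * G.dist a x < k := by omega
        have hcomm : G.dist x a = G.dist a x := dist_comm
        rw [hcomm]
        have hcast : (G.dist a x : ℝ) ≤ (k : ℝ) / 2 := by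
          have h3 : ((2 * G.dist a x : ℕ) : ℝ) ≤ ((k : ℕ) : ℝ) := Nat.cast_le.mpr (le_of_lt h2)
          push_cast at h3
          linarith
        exact le_trans hcast (le_max_left _ _)
      · refine ⟨b, q.end_mem_support, ?_⟩
        have h2 : 2 * G.dist x b < k := by omega
        have hcast : (G.dist x b : ℝ) ≤ (k : ℝ) / 2 := by
          have h3 : ((2 * G.dist x b : ℕ) : ℝ) ≤ ((k : ℕ) : ℝ) := Nat.cast_le.mpr (le_of_lt h2)
          push_cast at h3
          linarith
        exact le_trans hcast (le_max_left _ _)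
  · push_neg at hd2
    have hdeq : G.dist a b = 1 := by omega
    have hplen : p.length = 1 := by rw [hp, hdeq]
    obtain ⟨i, hgi, hle⟩ := Walk.mem_support_iff_exists_getVert.mp hx
    rw [hplen] at hle
    interval_cases i
    · rw [Walk.getVert_zero] at hgi
      subst hgi
      exact ⟨a, q.start_mem_support, by simpa [dist_self] using hR0⟩
    · rw [← hplen, Walk.getVert_length] at hgi
      subst hgi
      exact ⟨b, q.end_mem_support, by simpa [dist_self] using hR0⟩

end Part2

end SimpleGraph

/-- Geodesics are stable iff `G` is `ε`-densely `(k,m)`-chordal on the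
family of bigons, with the quantitative versions of both implications. -/
theorem geodesics_stable_iff_densely_chordal_on_bigons {V : Type*} (G : SimpleGraph V)
    (hconn : G.Connected) :
    ((∃ R : ℝ, 0 ≤ R ∧ G.GeodesicsStable R) ↔
        (∃ (ε : ℝ) (k m : ℕ), 0 < ε ∧
          G.DenselyChordalOn (fun _ c => G.IsBigon c) ε k m)) ∧
      (∀ (ε : ℝ) (k m : ℕ), G.DenselyChordalOn (fun _ c => G.IsBigon c) ε k m →
        G.GeodesicsStable (max ((k : ℝ) / 2) (ε + (m : ℝ)))) ∧
      (∀ R : ℕ, G.GeodesicsStable (R : ℝ) →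
        G.DenselyChordalOn (fun _ c => G.IsBigon c) (2 * (R : ℝ) + 1) (4 * R + 4) R) := by
  classical
  have part2 : ∀ (ε : ℝ) (k m : ℕ), G.DenselyChordalOn (fun _ c => G.IsBigon c) ε k m →
      G.GeodesicsStable (max ((k : ℝ) / 2) (ε + (m : ℝ))) := by
    intro ε k m hch a b p q hp hq
    constructor
    · intro x hx
      exact SimpleGraph.stable_aux hconn hch (p.length + q.length) p q le_rfl hp hq x hx
    · intro z hz
      obtain ⟨w, hw1, hw2⟩ :=
        SimpleGraph.stable_aux hconn hch (q.length + p.length) q p le_rfl hq hp z hz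
      exact ⟨w, hw1, by rwa [SimpleGraph.dist_comm] at hw2⟩
  have part3 : ∀ R : ℕ, G.GeodesicsStable (R : ℝ) →
      G.DenselyChordalOn (fun _ c => G.IsBigon c) (2 * (R : ℝ) + 1) (4 * R + 4) R := by
    intro R hstab v c hcyc hbig hlen x hxc
    obtain ⟨y, p, q, hp, hq, hc⟩ := hbig
    subst hc
    have hp' : p.length = G.dist v y := hp
    have hq' : q.length = G.dist v y := hq
    have hclen : (p.append q.reverse).length = G.dist v y + G.dist v y := by
      rw [SimpleGraph.Walk.length_append, SimpleGraph.Walk.length_reverse, hp', hq']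
    have hd : 2 * R + 2 ≤ G.dist v y := by omega
    have hpn : ¬ p.Nil := by
      rw [SimpleGraph.Walk.nil_iff_length_eq, hp']
      omega
    have hqn : ¬ q.Nil := by
      rw [SimpleGraph.Walk.nil_iff_length_eq, hq']
      omega
    have hint := SimpleGraph.bigon_inter hcyc hpn hqn
    have hpe : ∀ e ∈ p.edges, e ∈ (p.append q.reverse).edges := fun e he => by
      rw [SimpleGraph.Walk.edges_append]; exact List.mem_append_left _ he
    have hqe : ∀ e ∈ q.edges, e ∈ (p.append q.reverse).edges := fun e he => by
      rw [SimpleGraph.Walk.edges_append]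
      exact List.mem_append_right _
        (by rwa [SimpleGraph.Walk.edges_reverse, List.mem_reverse])
    have hcpq : ∀ e ∈ (p.append q.reverse).edges, e ∈ p.edges ∨ e ∈ q.edges := by
      intro e he
      rw [SimpleGraph.Walk.edges_append] at he
      rcases List.mem_append.mp he with h | h
      · exact Or.inl h
      · rw [SimpleGraph.Walk.edges_reverse, List.mem_reverse] at h; exact Or.inr h
    have hps : ∀ w ∈ p.support, w ∈ (p.append q.reverse).support := fun w hw =>
      SimpleGraph.Walk.subset_support_append_left p q.reverse hw
    have hqs : ∀ w ∈ q.support, w ∈ (p.append q.reverse).support := fun w hw =>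
      SimpleGraph.Walk.subset_support_append_right p q.reverse
        (by rwa [SimpleGraph.Walk.support_reverse, List.mem_reverse])
    have hstab' := hstab v y p q hp hq
    have hxloc : x ∈ p.support ∨ x ∈ q.support := by
      rcases (SimpleGraph.Walk.mem_support_append_iff p q.reverse).mp hxc with h | h
      · exact Or.inl h
      · rw [SimpleGraph.Walk.support_reverse, List.mem_reverse] at h; exact Or.inr h
    rcases hxloc with hxp | hxq
    · apply SimpleGraph.part3_core hconn R hp' hq' hpe hcpq hps hqs hint hd ?_ hxp
      intro u hu
      obtain ⟨z, hz1, hz2⟩ := hstab'.1 u hu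
      exact ⟨z, hz1, Nat.cast_le.mp (by exact_mod_cast hz2)⟩
    · apply SimpleGraph.part3_core hconn R hq' hp' hqe
        (fun e he => (hcpq e he).symm) hqs hps (fun w h1 h2 => hint w h2 h1) hd ?_ hxq
      intro u hu
      obtain ⟨z, hz1, hz2⟩ := hstab'.2 u hu
      refine ⟨z, hz1, ?_⟩
      rw [SimpleGraph.dist_comm]
      exact Nat.cast_le.mp (by exact_mod_cast hz2)
  refine ⟨⟨?_, ?_⟩, part2, part3⟩
  · rintro ⟨R, hR0, hst⟩
    have hst' : G.GeodesicsStable ((⌈R⌉₊ : ℕ) : ℝ) := by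
      intro a b p q hp hq
      obtain ⟨h1, h2⟩ := hst a b p q hp hq
      refine ⟨fun x hx => ?_, fun z hz => ?_⟩
      · obtain ⟨w, hw1, hw2⟩ := h1 x hx
        exact ⟨w, hw1, le_trans hw2 (Nat.le_ceil R)⟩
      · obtain ⟨w, hw1, hw2⟩ := h2 z hz
        exact ⟨w, hw1, le_trans hw2 (Nat.le_ceil R)⟩
    exact ⟨2 * ((⌈R⌉₊ : ℕ) : ℝ) + 1, 4 * ⌈R⌉₊ + 4, ⌈R⌉₊, by positivity, part3 ⌈R⌉₊ hst'⟩
  · rintro ⟨ε, k, m, hε, hch⟩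
    refine ⟨max ((k : ℝ) / 2) (ε + m), ?_, part2 ε k m hch⟩
    exact le_trans (by positivity) (le_max_left ((k : ℝ) / 2) (ε + (m : ℝ)))
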